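/- arXiv:1409.7606 — 2 statements merged into one kernel-verified Lean document; each statement's English description precedes it below -/
import Mathlib

section
/- Under the Kähler cvc(1) package described in the context, assume dim V ≥ 4. Then the positive self-adjoint operator -A∘A has at most two distinct eigenvalues. -/
/-!
The cvc(1) condition determines the Jacobi operators: for every `y`,
`R(z, y, y, u) = ‖y‖² ⟪z, u⟫ - ⟪z, y⟫ ⟪y, u⟫ + κ(y) ⟪z, A y⟫ ⟪A y, u⟫` with `κ(y) ≠ 0` for `y ≠ 0`.
Comparing this formula at `v` and at `J v` through the Kähler identity shows that `A J v` is
parallel to `J A v` for every `v`, hence `A J = τ J A` with `τ² = 1`, and `J` preserves the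
eigenspaces `E_c` of `-A²`. The parallelogram law makes `κ` constant on `E_c ⊕ E_d` for `c ≠ d`;
polarizing and applying the Bianchi identity to `v, J v ∈ E_c` and `w, J w ∈ E_d` then gives
`κ ⟪A J v, v⟫ ⟪A J w, w⟫ = 3 ‖v‖² ‖w‖²`. So `τ = 1`, and once an eigenvalue `d` is fixed, the
symmetric operator `A J` acts on every other eigenspace `E_c` as one and the same scalar `p`,
whence `c = p²`.
-/

open scoped RealInnerProductSpace

open Module End

section

variable {V : Type*} [NormedAddCommGroup V] [InnerProductSpace ℝ V]

theorem mem_orthogonal_span_pair_iff {y x w : V} :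
    w ∈ (Submodule.span ℝ {y, x})ᗮ ↔ ⟪w, y⟫ = 0 ∧ ⟪w, x⟫ = 0 := by
  rw [Submodule.span_insert, ← Submodule.inf_orthogonal, Submodule.mem_inf,
    Submodule.mem_orthogonal_singleton_iff_inner_right,
    Submodule.mem_orthogonal_singleton_iff_inner_right, real_inner_comm y, real_inner_comm x]

theorem apply_eq_of_eq_smul_inner_on_orthogonal {B : V →ₗ[ℝ] V →ₗ[ℝ] ℝ}
    (hB : ∀ z u, B z u = B u z) {y x : V} (hy : y ≠ 0) (hx : x ≠ 0) (hyx : ⟪y, x⟫ = 0)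
    (hBy : ∀ u, B y u = 0) {c : ℝ}
    (hBc : ∀ w, ⟪w, y⟫ = 0 → ⟪w, x⟫ = 0 → ∀ u, B w u = c * ⟪w, u⟫) (z u : V) :
    B z u = c * (⟪z, u⟫ - ⟪z, y⟫ * ⟪y, u⟫ / ⟪y, y⟫ - ⟪z, x⟫ * ⟪x, u⟫ / ⟪x, x⟫)
      + B x x * ⟪z, x⟫ * ⟪x, u⟫ / ⟪x, x⟫ ^ 2 := by
  have hyy : ⟪y, y⟫ ≠ 0 := inner_self_ne_zero.2 hy
  have hxx : ⟪x, x⟫ ≠ 0 := inner_self_ne_zero.2 hx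
  have hxy : ⟪x, y⟫ = 0 := by rw [real_inner_comm, hyx]
  let proj (z : V) : V := z - (⟪z, y⟫ / ⟪y, y⟫) • y - (⟪z, x⟫ / ⟪x, x⟫) • x
  have hproj : ∀ z u, B z u = ⟪z, x⟫ / ⟪x, x⟫ * B x u + c * ⟪proj z, u⟫ := by
    intro z u
    have hzy : ⟪proj z, y⟫ = 0 := by
      simp only [proj, inner_sub_left, real_inner_smul_left, hxy]; field_simp; ring
    have hzx : ⟪proj z, x⟫ = 0 := by
      simp only [proj, inner_sub_left, real_inner_smul_left, hyx]; field_simp; ring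
    have hz : z = proj z + (⟪z, y⟫ / ⟪y, y⟫) • y + (⟪z, x⟫ / ⟪x, x⟫) • x := by
      simp only [proj]; abel
    conv_lhs => rw [hz]
    simp only [map_add, map_smul, LinearMap.add_apply, LinearMap.smul_apply, smul_eq_mul, hBy,
      hBc _ hzy hzx]
    ring
  have hBx : B x u = ⟪u, x⟫ / ⟪x, x⟫ * B x x := by
    rw [hB, hproj u x]
    simp only [proj, inner_sub_left, real_inner_smul_left, hyx]
    field_simp
    ring
  rw [hproj, hBx]
  simp only [proj, inner_sub_left, real_inner_smul_left]
  rw [real_inner_comm u x]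
  field_simp
  ring

theorem exists_eq_smul_of_forall_inner_mul_inner_eq {a b : ℝ} {P Q : V} (hb : b ≠ 0)
    (hQ : Q ≠ 0) (h : ∀ z u, a * (⟪z, P⟫ * ⟪P, u⟫) = b * (⟪z, Q⟫ * ⟪Q, u⟫)) :
    ∃ t : ℝ, P = t • Q := by
  have hQQ : ⟪Q, Q⟫ ≠ 0 := inner_self_ne_zero.2 hQ
  have hPQ : (a * ⟪P, Q⟫) • P = (b * ⟪Q, Q⟫) • Q := by
    refine ext_inner_left ℝ fun z => ?_
    simp only [real_inner_smul_right]
    linear_combination h z Q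
  have ha : a * ⟪P, Q⟫ ≠ 0 := by
    intro h0
    rw [h0, zero_smul, eq_comm, smul_eq_zero] at hPQ
    exact hPQ.elim (mul_ne_zero hb hQQ) hQ
  exact ⟨(a * ⟪P, Q⟫)⁻¹ * (b * ⟪Q, Q⟫), by rw [mul_smul, ← hPQ, inv_smul_smul₀ ha]⟩

theorem LinearMap.IsSymmetric.apply_eq_smul_of_inner_apply_self_eq {T : V →ₗ[ℝ] V}
    (hT : T.IsSymmetric) {W : Submodule ℝ V} (hTW : ∀ x ∈ W, T x ∈ W) {p : ℝ}
    (hp : ∀ x ∈ W, ⟪T x, x⟫ = p * ⟪x, x⟫) {x : V} (hx : x ∈ W) : T x = p • x := by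
  have hpolar : ∀ y ∈ W, ⟪T x, y⟫ = p * ⟪x, y⟫ := by
    intro y hy
    have h := hp (x + y) (W.add_mem hx hy)
    simp only [map_add, inner_add_left, inner_add_right, hp x hx, hp y hy] at h
    rw [hT y x, real_inner_comm (T x) y, real_inner_comm x y] at h
    linarith
  have hr : T x - p • x ∈ W := W.sub_mem (hTW x hx) (W.smul_mem p hx)
  rw [← sub_eq_zero, ← inner_self_eq_zero (𝕜 := ℝ)]
  rw [inner_sub_left, hpolar _ hr, real_inner_smul_left]
  ring

theorem LinearMap.exists_eq_smul_of_forall_exists_eq_smul {K M : Type*} [Field K]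
    [AddCommGroup M] [Module K M] [FiniteDimensional K M] {f g : M →ₗ[K] M}
    (hg : Function.Injective g) (h : ∀ v, ∃ t : K, f v = t • g v) : ∃ a : K, f = a • g := by
  let e := LinearEquiv.ofInjectiveEndo g hg
  obtain ⟨a, ha⟩ := LinearMap.exists_eq_smul_id_of_forall_notLinearIndependent
    (f := e.symm.toLinearMap ∘ₗ f) fun v => by
      obtain ⟨t, ht⟩ := h v
      have hv : e.symm (f v) = t • v := by
        rw [ht, ← map_smul]; exact e.symm_apply_apply (t • v)
      rw [LinearIndependent.pair_iff]
      push Not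
      exact ⟨t, -1, by simp [hv], by simp⟩
  refine ⟨a, LinearMap.ext fun v => ?_⟩
  exact (by simpa using congrArg (fun φ : M →ₗ[K] M => e (φ v)) ha : f v = a • e v)

theorem exists_pair_of_forall_eq_of_ne {α : Type*} [Nonempty α] {P : α → Prop}
    (h : ∀ a b c, P a → P b → P c → a ≠ c → b ≠ c → a = b) :
    ∃ x y, ∀ a, P a → a = x ∨ a = y := by
  by_cases hpair : ∃ b c, P b ∧ P c ∧ b ≠ c
  · obtain ⟨b, c, hb, hc, hbc⟩ := hpair
    exact ⟨b, c, fun a ha => or_iff_not_imp_right.2 fun hac => h a b c ha hb hc hac hbc⟩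
  · push Not at hpair
    by_cases hne : ∃ c, P c
    · obtain ⟨c, hc⟩ := hne
      exact ⟨c, c, fun a ha => Or.inl (hpair a c ha hc)⟩
    · push Not at hne
      obtain ⟨x⟩ := ‹Nonempty α›
      exact ⟨x, x, fun a ha => (hne a ha).elim⟩

theorem map_mem_eigenspace_neg_comp_self (A : V →ₗ[ℝ] V) {c : ℝ} {x : V}
    (hx : x ∈ eigenspace (-(A ∘ₗ A)) c) : A x ∈ eigenspace (-(A ∘ₗ A)) c :=
  mapsTo_genEigenspace_of_comm ((Commute.refl A).mul_left (Commute.refl A)).neg_left c 1 hx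

theorem inner_J_left {J : V →ₗ[ℝ] V} (hJ : ∀ x y, ⟪J x, J y⟫ = ⟪x, y⟫)
    (hJ2 : ∀ x, J (J x) = -x) (x y : V) : ⟪J x, y⟫ = -⟪x, J y⟫ := by
  have := hJ x (J y)
  rw [hJ2, inner_neg_right] at this
  linarith

theorem inner_J_self {J : V →ₗ[ℝ] V} (hJ : ∀ x y, ⟪J x, J y⟫ = ⟪x, y⟫)
    (hJ2 : ∀ x, J (J x) = -x) (x : V) : ⟪J x, x⟫ = 0 := by
  linarith [inner_J_left hJ hJ2 x x, real_inner_comm x (J x)]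

theorem isSymmetric_neg_comp_self {A : V →ₗ[ℝ] V} (hA : ∀ x y, ⟪A x, y⟫ = -⟪x, A y⟫) :
    (-(A ∘ₗ A)).IsSymmetric := fun x y => by
  simp only [LinearMap.neg_apply, LinearMap.comp_apply, inner_neg_left, inner_neg_right, hA,
    neg_neg]

theorem LinearMap.IsSymmetric.inner_eq_zero_of_mem_eigenspace {T : V →ₗ[ℝ] V}
    (hT : T.IsSymmetric) {c d : ℝ} (hcd : c ≠ d) {x y : V} (hx : x ∈ eigenspace T c)
    (hy : y ∈ eigenspace T d) : ⟪x, y⟫ = 0 :=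
  hT.orthogonalFamily_eigenspaces hcd ⟨x, hx⟩ ⟨y, hy⟩

theorem eq_one_of_map_J_eq_smul {A J : V →ₗ[ℝ] V} (hA : ∀ x y, ⟪A x, y⟫ = -⟪x, A y⟫)
    (hJ : ∀ x y, ⟪J x, J y⟫ = ⟪x, y⟫) (hJ2 : ∀ x, J (J x) = -x) {τ : ℝ}
    (hτ : ∀ x, A (J x) = τ • J (A x)) {x : V} (hx : ⟪A (J x), x⟫ ≠ 0) : τ = 1 := by
  have h₁ : ⟪A (J x), x⟫ = ⟪J (A x), x⟫ := by
    rw [hA, inner_J_left hJ hJ2, neg_neg, real_inner_comm]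
  have h₂ : ⟪A (J x), x⟫ = τ * ⟪J (A x), x⟫ := by rw [hτ, real_inner_smul_left]
  rw [← h₁] at h₂
  exact (mul_eq_right₀ hx).1 h₂.symm

theorem eq_sq_of_inner_map_J_eq {A J : V →ₗ[ℝ] V} (hA : ∀ x y, ⟪A x, y⟫ = -⟪x, A y⟫)
    (hJ : ∀ x y, ⟪J x, J y⟫ = ⟪x, y⟫) (hJ2 : ∀ x, J (J x) = -x) (hAJ : ∀ x, A (J x) = J (A x))
    {c p : ℝ} (hc : HasEigenvalue (-(A ∘ₗ A)) c)
    (hp : ∀ u ∈ eigenspace (-(A ∘ₗ A)) c, ⟪A (J u), u⟫ = p * ⟪u, u⟫) : c = p ^ 2 := by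
  have hS : (A ∘ₗ J).IsSymmetric := fun x y => by
    simp only [LinearMap.comp_apply]
    rw [hA, inner_J_left hJ hJ2, neg_neg, hAJ]
  have hSE : ∀ u ∈ eigenspace (-(A ∘ₗ A)) c, (A ∘ₗ J) u ∈ eigenspace (-(A ∘ₗ A)) c :=
    fun u hu => mapsTo_genEigenspace_of_comm (LinearMap.ext fun x => by simp [hAJ]) c 1 hu
  obtain ⟨u, hu, hu0⟩ := hc.exists_hasEigenvector
  have hSu : A (J u) = p • u := hS.apply_eq_smul_of_inner_apply_self_eq hSE hp hu
  have hcu : c • u = (p ^ 2) • u :=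
    calc c • u = -(A (A u)) := (mem_eigenspace_iff.1 hu).symm
      _ = A (J (A (J u))) := by rw [hAJ u, hJ2, map_neg]
      _ = (p ^ 2) • u := by rw [hSu, map_smul, map_smul, hSu, smul_smul, sq]
  exact smul_left_injective ℝ hu0 hcu

structure CvcOne (R : V →ₗ[ℝ] V →ₗ[ℝ] V →ₗ[ℝ] V →ₗ[ℝ] ℝ) (A : V →ₗ[ℝ] V) : Prop where
  antisymm : ∀ X Y Z W : V, R X Y Z W = -R Y X Z W
  pair_symm : ∀ X Y Z W : V, R X Y Z W = R Z W X Y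
  injective : Function.Injective A
  skew : ∀ x y : V, ⟪A x, y⟫ = -⟪x, A y⟫
  jacobi_eigen_iff : ∀ v : V, ‖v‖ = 1 → ∀ w : V,
    (⟪w, v⟫ = 0 ∧ ∀ u : V, R w v v u = ⟪w, u⟫) ↔ w ∈ (Submodule.span ℝ {v, A v})ᗮ

/-- For a unit vector `v` this is `(λ(v) - 1) / ‖A v‖²`; the form chosen is homogeneous of
degree `0` in `v`. -/
noncomputable def kappa (R : V →ₗ[ℝ] V →ₗ[ℝ] V →ₗ[ℝ] V →ₗ[ℝ] ℝ) (A : V →ₗ[ℝ] V) (y : V) : ℝ :=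
  (R (A y) y y (A y) - ⟪y, y⟫ * ⟪A y, A y⟫) / ⟪A y, A y⟫ ^ 2

namespace CvcOne

variable {R : V →ₗ[ℝ] V →ₗ[ℝ] V →ₗ[ℝ] V →ₗ[ℝ] ℝ} {A : V →ₗ[ℝ] V}

theorem apply_self_left (h : CvcOne R A) (y z u : V) : R y y z u = 0 := by
  linarith [h.antisymm y y z u]

theorem antisymm_right (h : CvcOne R A) (X Y Z W : V) : R X Y Z W = -R X Y W Z := by
  rw [h.pair_symm, h.antisymm, h.pair_symm]

theorem jacobi_symm (h : CvcOne R A) (z y u : V) : R z y y u = R u y y z := by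
  rw [h.pair_symm, h.antisymm, h.antisymm_right, neg_neg]

theorem inner_map_self (h : CvcOne R A) (y : V) : ⟪A y, y⟫ = 0 := by
  linarith [h.skew y y, real_inner_comm (A y) y]

theorem map_ne_zero (h : CvcOne R A) {y : V} (hy : y ≠ 0) : A y ≠ 0 :=
  fun h0 => hy (h.injective (h0.trans (map_zero A).symm))

theorem jacobi_eigen_iff_of_ne_zero (h : CvcOne R A) {y : V} (hy : y ≠ 0) (w : V) :
    (⟪w, y⟫ = 0 ∧ ∀ u, R w y y u = ⟪y, y⟫ * ⟪w, u⟫) ↔ ⟪w, y⟫ = 0 ∧ ⟪w, A y⟫ = 0 := by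
  set r := ‖y‖
  have hr : r ≠ 0 := norm_ne_zero_iff.2 hy
  obtain ⟨v, hv, hyv⟩ : ∃ v : V, ‖v‖ = 1 ∧ y = r • v :=
    ⟨r⁻¹ • y, norm_smul_inv_norm hy, by rw [smul_inv_smul₀ hr]⟩
  clear_value r
  subst hyv
  have hvv : ⟪v, v⟫ = 1 := by rw [real_inner_self_eq_norm_sq, hv, one_pow]
  have key := h.jacobi_eigen_iff v hv w
  rw [mem_orthogonal_span_pair_iff] at key
  simp only [map_smul, LinearMap.smul_apply, smul_eq_mul, real_inner_smul_left,
    real_inner_smul_right, hvv, mul_eq_zero, hr, false_or, mul_one]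
  rw [← key]
  refine and_congr_right fun _ => forall_congr' fun u => ?_
  rw [← mul_assoc]
  exact mul_right_inj' (mul_ne_zero hr hr)

theorem jacobi_eq (h : CvcOne R A) (y z u : V) :
    R z y y u = ⟪y, y⟫ * ⟪z, u⟫ - ⟪z, y⟫ * ⟪y, u⟫ + kappa R A y * (⟪z, A y⟫ * ⟪A y, u⟫) := by
  rcases eq_or_ne y 0 with rfl | hy
  · simp
  have hAy := h.map_ne_zero hy
  have hB := apply_eq_of_eq_smul_inner_on_orthogonal (B := (R.flip y).flip y)
    (fun z u => h.jacobi_symm z y u) hy hAy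
    (by rw [real_inner_comm]; exact h.inner_map_self y) (h.apply_self_left y y)
    (fun w hwy hwx => ((h.jacobi_eigen_iff_of_ne_zero hy w).2 ⟨hwy, hwx⟩).2) z u
  simp only [LinearMap.flip_apply] at hB
  rw [hB, kappa]
  have hyy : ⟪y, y⟫ ≠ 0 := inner_self_ne_zero.2 hy
  have hxx : ⟪A y, A y⟫ ≠ 0 := inner_self_ne_zero.2 hAy
  field_simp
  ring

theorem kappa_ne_zero (h : CvcOne R A) {y : V} (hy : y ≠ 0) : kappa R A y ≠ 0 := by
  intro hk
  have hAy : ⟪A y, y⟫ = 0 := h.inner_map_self y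
  have hjac : ∀ u, R (A y) y y u = ⟪y, y⟫ * ⟪A y, u⟫ := fun u => by
    rw [h.jacobi_eq, hk, hAy]; ring
  exact h.map_ne_zero hy
    (inner_self_eq_zero.1 ((h.jacobi_eigen_iff_of_ne_zero hy (A y)).1 ⟨hAy, hjac⟩).2)

theorem kappa_parallelogram (h : CvcOne R A) (v w z u : V) :
    kappa R A (v + w) * (⟪z, A (v + w)⟫ * ⟪A (v + w), u⟫)
      + kappa R A (v - w) * (⟪z, A (v - w)⟫ * ⟪A (v - w), u⟫)
      = 2 * (kappa R A v * (⟪z, A v⟫ * ⟪A v, u⟫) + kappa R A w * (⟪z, A w⟫ * ⟪A w, u⟫)) := by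
  have hp := h.jacobi_eq (v + w) z u
  have hm := h.jacobi_eq (v - w) z u
  simp only [map_add, map_sub, LinearMap.add_apply, LinearMap.sub_apply, inner_add_left,
    inner_add_right, inner_sub_left, inner_sub_right] at hp hm ⊢
  linear_combination 2 * h.jacobi_eq v z u + 2 * h.jacobi_eq w z u - hp - hm

theorem kappa_add_eq (h : CvcOne R A) {v w : V} (hv : v ≠ 0) (hw : w ≠ 0)
    (hvw : ⟪A v, A w⟫ = 0) : kappa R A (v + w) = kappa R A v ∧ kappa R A w = kappa R A v := by
  have hp : ⟪A v, A v⟫ ≠ 0 := inner_self_ne_zero.2 (h.map_ne_zero hv)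
  have hq : ⟪A w, A w⟫ ≠ 0 := inner_self_ne_zero.2 (h.map_ne_zero hw)
  have hwv : ⟪A w, A v⟫ = 0 := by rw [real_inner_comm, hvw]
  have e₁ := h.kappa_parallelogram v w (A v) (A v)
  have e₂ := h.kappa_parallelogram v w (A v) (A w)
  have e₃ := h.kappa_parallelogram v w (A w) (A w)
  simp only [map_add, map_sub, inner_add_left, inner_add_right, inner_sub_left, inner_sub_right,
    hvw, hwv] at e₁ e₂ e₃
  have hpm : kappa R A (v + w) * (⟪A v, A v⟫ * ⟪A w, A w⟫)
      = kappa R A (v - w) * (⟪A v, A v⟫ * ⟪A w, A w⟫) := by linear_combination e₂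
  rw [← mul_right_cancel₀ (mul_ne_zero hp hq) hpm] at e₁ e₃
  have hv' : kappa R A (v + w) * ⟪A v, A v⟫ ^ 2 = kappa R A v * ⟪A v, A v⟫ ^ 2 := by
    linear_combination e₁ / 2
  have hw' : kappa R A (v + w) * ⟪A w, A w⟫ ^ 2 = kappa R A w * ⟪A w, A w⟫ ^ 2 := by
    linear_combination e₃ / 2
  have hv'' := mul_right_cancel₀ (pow_ne_zero 2 hp) hv'
  exact ⟨hv'', (mul_right_cancel₀ (pow_ne_zero 2 hq) hw').symm.trans hv''⟩

theorem kappa_eq_of_mem_eigenspace (h : CvcOne R A) {c d : ℝ} (hcd : c ≠ d) {v w : V}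
    (hv : v ∈ eigenspace (-(A ∘ₗ A)) c) (hw : w ∈ eigenspace (-(A ∘ₗ A)) d) (hv0 : v ≠ 0)
    (hw0 : w ≠ 0) : kappa R A (v + w) = kappa R A v ∧ kappa R A w = kappa R A v :=
  h.kappa_add_eq hv0 hw0 ((isSymmetric_neg_comp_self h.skew).inner_eq_zero_of_mem_eigenspace hcd
    (map_mem_eigenspace_neg_comp_self A hv) (map_mem_eigenspace_neg_comp_self A hw))

theorem jacobi_eq_of_mem_sup (h : CvcOne R A) {c d : ℝ} (hcd : c ≠ d) {v w : V}
    (hv : v ∈ eigenspace (-(A ∘ₗ A)) c) (hw : w ∈ eigenspace (-(A ∘ₗ A)) d) (hv0 : v ≠ 0)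
    (hw0 : w ≠ 0) {y : V} (hy : y ∈ eigenspace (-(A ∘ₗ A)) c ⊔ eigenspace (-(A ∘ₗ A)) d)
    (z u : V) :
    R z y y u = ⟪y, y⟫ * ⟪z, u⟫ - ⟪z, y⟫ * ⟪y, u⟫ + kappa R A v * (⟪z, A y⟫ * ⟪A y, u⟫) := by
  suffices kappa R A y = kappa R A v ∨ y = 0 by
    rcases this with hk | rfl
    · rw [← hk, h.jacobi_eq]
    · simp
  have hc : ∀ y ∈ eigenspace (-(A ∘ₗ A)) c, y ≠ 0 → kappa R A y = kappa R A v := fun y hy hy0 =>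
    (h.kappa_eq_of_mem_eigenspace hcd hy hw hy0 hw0).2.symm.trans
      (h.kappa_eq_of_mem_eigenspace hcd hv hw hv0 hw0).2
  have hd : ∀ y ∈ eigenspace (-(A ∘ₗ A)) d, y ≠ 0 → kappa R A y = kappa R A v := fun y hy hy0 =>
    (h.kappa_eq_of_mem_eigenspace hcd hv hy hv0 hy0).2
  obtain ⟨y₁, hy₁, y₂, hy₂, rfl⟩ := Submodule.mem_sup.1 hy
  rcases eq_or_ne y₁ 0 with rfl | hy₁0
  · rw [zero_add]
    exact (eq_or_ne y₂ 0).symm.imp (hd y₂ hy₂) id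
  rcases eq_or_ne y₂ 0 with rfl | hy₂0
  · exact Or.inl (by rw [add_zero]; exact hc y₁ hy₁ hy₁0)
  exact Or.inl (((h.kappa_eq_of_mem_eigenspace hcd hy₁ hy₂ hy₁0 hy₂0).1).trans (hc y₁ hy₁ hy₁0))

theorem jacobi_polarized_of_mem_sup (h : CvcOne R A) {c d : ℝ} (hcd : c ≠ d) {v w : V}
    (hv : v ∈ eigenspace (-(A ∘ₗ A)) c) (hw : w ∈ eigenspace (-(A ∘ₗ A)) d) (hv0 : v ≠ 0)
    (hw0 : w ≠ 0) {y y' : V} (hy : y ∈ eigenspace (-(A ∘ₗ A)) c ⊔ eigenspace (-(A ∘ₗ A)) d)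
    (hy' : y' ∈ eigenspace (-(A ∘ₗ A)) c ⊔ eigenspace (-(A ∘ₗ A)) d) (z u : V) :
    R z y y' u + R z y' y u = 2 * ⟪y, y'⟫ * ⟪z, u⟫ - ⟪z, y⟫ * ⟪y', u⟫ - ⟪z, y'⟫ * ⟪y, u⟫
      + kappa R A v * (⟪z, A y⟫ * ⟪A y', u⟫ + ⟪z, A y'⟫ * ⟪A y, u⟫) := by
  have hsum := h.jacobi_eq_of_mem_sup hcd hv hw hv0 hw0 (Submodule.add_mem _ hy hy') z u
  simp only [map_add, LinearMap.add_apply, inner_add_left, inner_add_right] at hsum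
  linear_combination hsum - h.jacobi_eq_of_mem_sup hcd hv hw hv0 hw0 hy z u
    - h.jacobi_eq_of_mem_sup hcd hv hw hv0 hw0 hy' z u + ⟪z, u⟫ * real_inner_comm y y'

section Kahler

variable {J : V →ₗ[ℝ] V}

theorem jacobi_map_J (h : CvcOne R A) (hJ2 : ∀ x, J (J x) = -x)
    (hRJ : ∀ X Y Z W, R (J X) (J Y) Z W = R X Y Z W) (z v u : V) :
    R (J z) v v (J u) = R z (J v) (J v) u := by
  calc R (J z) v v (J u) = -R z (J v) v (J u) := by
        rw [← hRJ (J z), hJ2, ← neg_one_smul ℝ z, map_smul]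
        simp only [LinearMap.smul_apply, smul_eq_mul, neg_one_mul]
    _ = -R v (J u) z (J v) := by rw [h.pair_symm]
    _ = R (J v) u z (J v) := by
        simp only [← hRJ v, hJ2, map_neg, LinearMap.neg_apply, neg_neg]
    _ = R z (J v) (J v) u := by rw [h.pair_symm]

theorem exists_map_J_eq_smul (h : CvcOne R A) (hJ : ∀ x y, ⟪J x, J y⟫ = ⟪x, y⟫)
    (hJ2 : ∀ x, J (J x) = -x) (hRJ : ∀ X Y Z W, R (J X) (J Y) Z W = R X Y Z W) (v : V) :
    ∃ t : ℝ, A (J v) = t • J (A v) := by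
  rcases eq_or_ne v 0 with rfl | hv
  · exact ⟨0, by simp⟩
  have hJAv : J (A v) ≠ 0 := fun h0 => h.map_ne_zero hv (by simpa [h0] using hJ2 (A v))
  refine exists_eq_smul_of_forall_inner_mul_inner_eq (a := kappa R A (J v)) (h.kappa_ne_zero hv)
    hJAv fun z u => ?_
  have hJv := h.jacobi_eq (J v) z u
  have hv' := h.jacobi_eq v (J z) (J u)
  have e₁ : ⟪v, J u⟫ = -⟪J v, u⟫ := by linarith [inner_J_left hJ hJ2 v u]
  have e₂ : ⟪A v, J u⟫ = -⟪J (A v), u⟫ := by linarith [inner_J_left hJ hJ2 (A v) u]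
  rw [h.jacobi_map_J hJ2 hRJ, hJ, inner_J_left hJ hJ2 z, inner_J_left hJ hJ2 z, e₁, e₂] at hv'
  rw [hJ] at hJv
  linear_combination hv' - hJv

theorem exists_comp_J_eq_smul [FiniteDimensional ℝ V] [Nontrivial V] (h : CvcOne R A)
    (hJ : ∀ x y, ⟪J x, J y⟫ = ⟪x, y⟫) (hJ2 : ∀ x, J (J x) = -x)
    (hRJ : ∀ X Y Z W, R (J X) (J Y) Z W = R X Y Z W) :
    ∃ τ : ℝ, τ * τ = 1 ∧ ∀ x, A (J x) = τ • J (A x) := by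
  have hJinj : Function.Injective J := fun x y hxy => by
    simpa [hJ2] using congrArg J hxy
  obtain ⟨τ, hτ⟩ := LinearMap.exists_eq_smul_of_forall_exists_eq_smul (f := A ∘ₗ J)
    (g := J ∘ₗ A) (hJinj.comp h.injective) (h.exists_map_J_eq_smul hJ hJ2 hRJ)
  have hτx : ∀ x, A (J x) = τ • J (A x) := fun x => LinearMap.congr_fun hτ x
  refine ⟨τ, ?_, hτx⟩
  obtain ⟨v, hv⟩ := exists_ne (0 : V)
  have hAJJ : (τ * τ) • -A v = -A v :=
    calc (τ * τ) • -A v = τ • J (A (J v)) := by rw [hτx, map_smul, hJ2, mul_smul]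
      _ = A (J (J v)) := (hτx (J v)).symm
      _ = -A v := by rw [hJ2, map_neg]
  have h0 : (τ * τ - 1) • -A v = 0 := by rw [sub_smul, one_smul, hAJJ, sub_self]
  rw [smul_eq_zero, sub_eq_zero, neg_eq_zero] at h0
  exact h0.resolve_right (h.map_ne_zero hv)

theorem kappa_mul_inner_mul_inner_eq (h : CvcOne R A) (hJ : ∀ x y, ⟪J x, J y⟫ = ⟪x, y⟫)
    (hJ2 : ∀ x, J (J x) = -x) (hRJ : ∀ X Y Z W, R (J X) (J Y) Z W = R X Y Z W)
    (hbianchi : ∀ X Y Z W, R X Y Z W + R Y Z X W + R Z X Y W = 0)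
    (hJA : ∀ x, J (A (A x)) = A (A (J x))) {c d : ℝ} (hcd : c ≠ d) {v w : V}
    (hv : v ∈ eigenspace (-(A ∘ₗ A)) c) (hw : w ∈ eigenspace (-(A ∘ₗ A)) d) (hv0 : v ≠ 0)
    (hw0 : w ≠ 0) :
    kappa R A v * ⟪w, A (J w)⟫ * ⟪A (J v), v⟫ = 3 * ⟪v, v⟫ * ⟪w, w⟫ := by
  have hJE : ∀ {e x}, x ∈ eigenspace (-(A ∘ₗ A)) e → J x ∈ eigenspace (-(A ∘ₗ A)) e :=
    fun hx => mapsTo_genEigenspace_of_comm (LinearMap.ext fun x => by simp [hJA]) _ 1 hx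
  have horth : ∀ {x y}, x ∈ eigenspace (-(A ∘ₗ A)) c → y ∈ eigenspace (-(A ∘ₗ A)) d →
      ⟪x, y⟫ = 0 :=
    (isSymmetric_neg_comp_self h.skew).inner_eq_zero_of_mem_eigenspace hcd
  have horth' : ∀ {x y}, x ∈ eigenspace (-(A ∘ₗ A)) c → y ∈ eigenspace (-(A ∘ₗ A)) d →
      ⟪y, x⟫ = 0 := fun hx hy => by rw [real_inner_comm]; exact horth hx hy
  have hAE : ∀ {e x}, x ∈ eigenspace (-(A ∘ₗ A)) e → A x ∈ eigenspace (-(A ∘ₗ A)) e :=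
    map_mem_eigenspace_neg_comp_self A
  have m₁ := h.jacobi_polarized_of_mem_sup hcd hv hw hv0 hw0
    (Submodule.mem_sup_right (hJE hw)) (Submodule.mem_sup_right hw) (J v) v
  have m₂ := h.jacobi_polarized_of_mem_sup hcd hv hw hv0 hw0
    (Submodule.mem_sup_left (hJE hv)) (Submodule.mem_sup_right (hJE hw)) w v
  simp only [inner_J_self hJ hJ2, horth (hJE hv) (hJE hw), horth (hJE hv) hw,
    horth (hJE hv) (hAE (hJE hw)), horth (hJE hv) (hAE hw), horth' (hJE hv) hw,
    horth' (hAE (hJE hv)) hw, real_inner_comm (J w) w,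
    mul_zero, zero_mul, add_zero, zero_add, sub_zero] at m₁ m₂
  have hvw : R v w w v = ⟪v, v⟫ * ⟪w, w⟫ := by
    rw [h.jacobi_eq w v v, horth hv hw, horth' hv hw, horth hv (hAE hw)]
    ring
  -- With `a = R w (J v) (J w) v` and `b = R w (J w) (J v) v`: `m₁` and the Kähler identity give
  -- `a = ‖v‖²‖w‖²`, the Bianchi identity then gives `b = 2 ‖v‖²‖w‖²`, and `m₂` says that `a + b`
  -- is the left-hand side.
  linear_combination 3 * hRJ v w w v + 3 * hvw - 2 * m₁ + 2 * h.antisymm (J v) w (J w) v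
    + h.antisymm (J w) w (J v) v - hbianchi (J v) (J w) w v - m₂

theorem eq_sq_of_hasEigenvalue_of_ne (h : CvcOne R A) (hJ : ∀ x y, ⟪J x, J y⟫ = ⟪x, y⟫)
    (hJ2 : ∀ x, J (J x) = -x) (hRJ : ∀ X Y Z W, R (J X) (J Y) Z W = R X Y Z W)
    (hbianchi : ∀ X Y Z W, R X Y Z W + R Y Z X W + R Z X Y W = 0) {τ : ℝ} (hτ2 : τ * τ = 1)
    (hτ : ∀ x, A (J x) = τ • J (A x)) {d e : ℝ} {v : V} (hv : v ∈ eigenspace (-(A ∘ₗ A)) d)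
    (hv0 : v ≠ 0) (he : HasEigenvalue (-(A ∘ₗ A)) e) (hed : e ≠ d) :
    e = (3 * ⟪v, v⟫ / (kappa R A v * ⟪A (J v), v⟫)) ^ 2 := by
  have hJA : ∀ x, J (A (A x)) = A (A (J x)) := fun x => by
    rw [hτ, map_smul, hτ, smul_smul, hτ2, one_smul]
  have hcross {w : V} (hw : w ∈ eigenspace (-(A ∘ₗ A)) e) (hw0 : w ≠ 0) :=
    h.kappa_mul_inner_mul_inner_eq hJ hJ2 hRJ hbianchi hJA hed.symm hv hw hv0 hw0
  obtain ⟨w, hw, hw0⟩ := he.exists_hasEigenvector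
  have hne : kappa R A v * ⟪A (J v), v⟫ ≠ 0 := by
    intro h0
    have := hcross hw hw0
    rw [mul_right_comm, h0, zero_mul, eq_comm] at this
    exact mul_ne_zero (mul_ne_zero three_ne_zero (inner_self_ne_zero.2 hv0))
      (inner_self_ne_zero.2 hw0) this
  have hτ1 : τ = 1 := eq_one_of_map_J_eq_smul h.skew hJ hJ2 hτ (right_ne_zero_of_mul hne)
  refine eq_sq_of_inner_map_J_eq h.skew hJ hJ2 (fun x => by rw [hτ, hτ1, one_smul]) he
    fun u hu => ?_
  rcases eq_or_ne u 0 with rfl | hu0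
  · simp
  have := hcross hu hu0
  rw [real_inner_comm (A (J u))] at this
  rw [div_mul_eq_mul_div, eq_div_iff hne]
  linear_combination this

end Kahler

end CvcOne

end

theorem stmt_16_general
    {V : Type*} [NormedAddCommGroup V] [InnerProductSpace ℝ V] [FiniteDimensional ℝ V]
    (J : V →ₗ[ℝ] V)
    (hJiso : ∀ x y : V, ⟪J x, J y⟫ = ⟪x, y⟫)
    (hJ2 : ∀ x : V, J (J x) = -x)
    (R : V →ₗ[ℝ] V →ₗ[ℝ] V →ₗ[ℝ] V →ₗ[ℝ] ℝ)
    (hskew : ∀ X Y Z W : V, R X Y Z W = - R Y X Z W)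
    (hpair : ∀ X Y Z W : V, R X Y Z W = R Z W X Y)
    (hbianchi : ∀ X Y Z W : V, R X Y Z W + R Y Z X W + R Z X Y W = 0)
    (hkahler : ∀ X Y Z W : V, R (J X) (J Y) Z W = R X Y Z W)
    (A : V →ₗ[ℝ] V) (hAinv : Function.Bijective A)
    (hAskew : ∀ x y : V, ⟪A x, y⟫ = -⟪x, A y⟫)
    (hE : ∀ v : V, ‖v‖ = 1 → ∀ w : V,
      (⟪w, v⟫ = 0 ∧ ∀ u : V, R w v v u = ⟪w, u⟫) ↔
        w ∈ (Submodule.span ℝ {v, A v})ᗮ) :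
    ∃ c1 c2 : ℝ, ∀ c : ℝ,
      Module.End.HasEigenvalue (-(A ∘ₗ A) : Module.End ℝ V) c → c = c1 ∨ c = c2 := by
  have h : CvcOne R A := ⟨hskew, hpair, hAinv.1, hAskew, hE⟩
  refine exists_pair_of_forall_eq_of_ne fun c c' d hc hc' hd hcd hc'd => ?_
  obtain ⟨v, hv, hv0⟩ := hd.exists_hasEigenvector
  have : Nontrivial V := ⟨⟨v, 0, hv0⟩⟩
  obtain ⟨τ, hτ2, hτ⟩ := h.exists_comp_J_eq_smul hJiso hJ2 hkahler
  exact (h.eq_sq_of_hasEigenvalue_of_ne hJiso hJ2 hkahler hbianchi hτ2 hτ hv hv0 hc hcd).trans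
    (h.eq_sq_of_hasEigenvalue_of_ne hJiso hJ2 hkahler hbianchi hτ2 hτ hv hv0 hc' hc'd).symm

/-- In the Kähler cvc(1) package with `dim V ≥ 4`, the positive
self-adjoint operator `-A∘A` has at most two distinct eigenvalues. -/
theorem stmt_16
    {V : Type*} [NormedAddCommGroup V] [InnerProductSpace ℝ V] [FiniteDimensional ℝ V]
    (hdim : 4 ≤ Module.finrank ℝ V)
    (J : V →ₗ[ℝ] V)
    (hJiso : ∀ x y : V, ⟪J x, J y⟫ = ⟪x, y⟫)
    (hJ2 : ∀ x : V, J (J x) = -x)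
    (R : V →ₗ[ℝ] V →ₗ[ℝ] V →ₗ[ℝ] V →ₗ[ℝ] ℝ)
    (hskew : ∀ X Y Z W : V, R X Y Z W = - R Y X Z W)
    (hpair : ∀ X Y Z W : V, R X Y Z W = R Z W X Y)
    (hbianchi : ∀ X Y Z W : V, R X Y Z W + R Y Z X W + R Z X Y W = 0)
    (hkahler : ∀ X Y Z W : V, R (J X) (J Y) Z W = R X Y Z W)
    (hsec : ∀ x y : V, ‖x‖ = 1 → ‖y‖ = 1 → ⟪x, y⟫ = 0 → 1 ≤ R y x x y)
    (A : V →ₗ[ℝ] V) (hAinv : Function.Bijective A)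
    (hAskew : ∀ x y : V, ⟪A x, y⟫ = -⟪x, A y⟫)
    (hE : ∀ v : V, ‖v‖ = 1 → ∀ w : V,
      (⟪w, v⟫ = 0 ∧ ∀ u : V, R w v v u = ⟪w, u⟫) ↔
        w ∈ (Submodule.span ℝ {v, A v})ᗮ) :
    ∃ c1 c2 : ℝ, ∀ c : ℝ,
      Module.End.HasEigenvalue (-(A ∘ₗ A) : Module.End ℝ V) c → c = c1 ∨ c = c2 :=
  stmt_16_general J hJiso hJ2 R hskew hpair hbianchi hkahler A hAinv hAskew hE
end

section
/- Under the Kähler cvc(1) package described in the context, assume dim V ≥ 6. Then a 2-dimensional subspace σ ⊆ V satisfies J(σ) = σ if and only if A(σ) = σ. -/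
/-!
The eigenspace hypothesis pins down the Jacobi operator of every `v ≠ 0`:
`R(x, v, v, y) = ‖v‖² ⟪x, y⟫ - ⟪x, v⟫ ⟪y, v⟫ + c(v) ⟪x, A v⟫ ⟪y, A v⟫` with `c(v) ≠ 0`.
Comparing the Jacobi operators of `u ± v` with those of `u` and `v` for orthogonal `u, v`, on
vectors dual to `A u` and `A v`, shows that `c` is constant. The Kähler identity then forces
`A (J u) = ± J (A u)`, and the Bianchi identity applied to `J u, J v, v`, with `v` orthogonal to
`u, J u, A u, A (J u)` (possible as `dim V ≥ 5`), gives `c ⟪J v, A v⟫ A (J u) = -3 ‖v‖² u`.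
So `A u` and `J u` span the same line for every `u`, and `A`, `J` have the same invariant
subspaces.
-/

open scoped RealInnerProductSpace

section InnerProduct

variable {V : Type*} [NormedAddCommGroup V] [InnerProductSpace ℝ V]

theorem eq_or_eq_neg_of_forall_inner_sq_eq {a b : V}
    (h : ∀ x : V, ⟪x, a⟫ ^ 2 = ⟪x, b⟫ ^ 2) : a = b ∨ a = -b := by
  have ha := h a
  have hb := h b
  rw [real_inner_self_eq_norm_sq] at ha
  rw [real_inner_self_eq_norm_sq, real_inner_comm] at hb
  have hnorm : ‖a‖ ^ 2 = ‖b‖ ^ 2 := by nlinarith [sq_nonneg ‖a‖, sq_nonneg ‖b‖]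
  rcases sq_eq_sq_iff_eq_or_eq_neg.mp hb with hab | hab
  · left
    rw [← sub_eq_zero, ← norm_eq_zero, ← sq_eq_zero_iff, norm_sub_sq_real]
    linarith
  · right
    rw [← add_eq_zero_iff_eq_neg, ← norm_eq_zero, ← sq_eq_zero_iff, norm_add_sq_real]
    linarith

theorem LinearMap.apply_eq_inner_mul_of_forall_inner_eq_zero (f : V →ₗ[ℝ] ℝ) {e : V}
    (h : ∀ x, ⟪x, e⟫ = 0 → f x = 0) (x : V) : f x = ⟪x, e⟫ / ⟪e, e⟫ * f e := by
  rcases eq_or_ne e 0 with rfl | he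
  · simpa using h x (inner_zero_right x)
  have hee : ⟪e, e⟫ ≠ 0 := inner_self_ne_zero.mpr he
  have hperp := h (x - (⟪x, e⟫ / ⟪e, e⟫) • e) (by
    rw [inner_sub_left, real_inner_smul_left, div_mul_cancel₀ _ hee, sub_self])
  rw [map_sub, map_smul, smul_eq_mul, sub_eq_zero] at hperp
  exact hperp

theorem exists_ne_zero_forall_inner_eq_zero [FiniteDimensional ℝ V] (s : Finset V)
    (hs : s.card < Module.finrank ℝ V) : ∃ p : V, p ≠ 0 ∧ ∀ a ∈ s, ⟪a, p⟫ = 0 := by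
  have hspan : Module.finrank ℝ (Submodule.span ℝ (s : Set V)) ≤ s.card :=
    finrank_span_finset_le_card s
  have hpos : 0 < Module.finrank ℝ (Submodule.span ℝ (s : Set V))ᗮ := by
    have := (Submodule.span ℝ (s : Set V)).finrank_add_finrank_orthogonal
    omega
  obtain ⟨p, hp⟩ := Module.finrank_pos_iff_exists_ne_zero.mp hpos
  refine ⟨p, by simpa using hp, fun a ha => ?_⟩
  exact (Submodule.mem_orthogonal _ _).mp p.2 a (Submodule.subset_span ha)

theorem mem_orthogonal_span_pair {a b w : V} (ha : ⟪w, a⟫ = 0) (hb : ⟪w, b⟫ = 0) :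
    w ∈ (Submodule.span ℝ {a, b})ᗮ := by
  rw [Submodule.mem_orthogonal']
  intro z hz
  obtain ⟨s, t, rfl⟩ := Submodule.mem_span_pair.mp hz
  rw [inner_add_right, real_inner_smul_right, real_inner_smul_right, ha, hb, mul_zero,
    mul_zero, add_zero]

end InnerProduct

section Curvature

variable {V : Type*} [NormedAddCommGroup V] [InnerProductSpace ℝ V]
  {R : V →ₗ[ℝ] V →ₗ[ℝ] V →ₗ[ℝ] V →ₗ[ℝ] ℝ} {A J : V →ₗ[ℝ] V} {c : ℝ}

/-- `R(·, v, v, ·)` has the shape of the Jacobi operator of complex projective space,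
`‖v‖² ⟪x, y⟫ - ⟪x, v⟫ ⟪y, v⟫ + 3 ⟪x, J v⟫ ⟪y, J v⟫`, with `A v` in place of `J v` and `c`
in place of `3`. -/
def IsModelJacobi (R : V →ₗ[ℝ] V →ₗ[ℝ] V →ₗ[ℝ] V →ₗ[ℝ] ℝ) (A : V →ₗ[ℝ] V) (c : ℝ) (v : V) :
    Prop :=
  ∀ x y : V, R x v v y = ⟪v, v⟫ * ⟪x, y⟫ - ⟪x, v⟫ * ⟪y, v⟫ + c * (⟪x, A v⟫ * ⟪y, A v⟫)

theorem IsModelJacobi.smul {v : V} (h : IsModelJacobi R A c v) (r : ℝ) :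
    IsModelJacobi R A c (r • v) := by
  intro x y
  simp only [map_smul, LinearMap.smul_apply, smul_eq_mul, real_inner_smul_left,
    real_inner_smul_right, h x y]
  ring

theorem jacobi_symm (hskew : ∀ X Y Z W : V, R X Y Z W = - R Y X Z W)
    (hpair : ∀ X Y Z W : V, R X Y Z W = R Z W X Y) (x v y : V) :
    R x v v y = R y v v x := by
  rw [hpair, hskew, hpair, hskew, hpair, neg_neg]

theorem inner_apply_self_eq_zero_of_skew {T : V →ₗ[ℝ] V}
    (hT : ∀ x y : V, ⟪T x, y⟫ = -⟪x, T y⟫) (v : V) : ⟪T v, v⟫ = 0 := by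
  have := hT v v
  rw [real_inner_comm (T v) v] at this
  linarith

theorem exists_isModelJacobi_of_norm_eq_one (hskew : ∀ X Y Z W : V, R X Y Z W = - R Y X Z W)
    (hpair : ∀ X Y Z W : V, R X Y Z W = R Z W X Y) (hAskew : ∀ x y : V, ⟪A x, y⟫ = -⟪x, A y⟫)
    {v : V} (hv : ‖v‖ = 1)
    (heigen : ∀ w, ⟪w, v⟫ = 0 → ⟪w, A v⟫ = 0 → ∀ u, R w v v u = ⟪w, u⟫) :
    ∃ c, IsModelJacobi R A c v := by
  have hvv : ⟪v, v⟫ = 1 := by rw [real_inner_self_eq_norm_sq, hv, one_pow]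
  have hAv : ⟪A v, v⟫ = 0 := inner_apply_self_eq_zero_of_skew hAskew v
  let g : V → V →ₗ[ℝ] ℝ := fun y =>
    ((R.flip v).flip v).flip y - innerₗ V y + ⟪y, v⟫ • innerₗ V v
  have hg : ∀ x y, g y x = R x v v y - ⟪x, y⟫ + ⟪x, v⟫ * ⟪y, v⟫ := by
    intro x y
    simp only [g, LinearMap.add_apply, LinearMap.sub_apply, LinearMap.smul_apply,
      LinearMap.flip_apply, innerₗ_apply_apply, smul_eq_mul]
    rw [real_inner_comm x y, real_inner_comm x v]
    ring
  have hg_eq_zero : ∀ y x, ⟪x, A v⟫ = 0 → g y x = 0 := by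
    intro y x hx
    have h₁ : ⟪x - ⟪x, v⟫ • v, v⟫ = 0 := by
      rw [inner_sub_left, real_inner_smul_left, hvv, mul_one, sub_self]
    have h₂ : ⟪x - ⟪x, v⟫ • v, A v⟫ = 0 := by
      rw [inner_sub_left, real_inner_smul_left, hx, real_inner_comm (A v) v, hAv, mul_zero,
        sub_zero]
    have hvvvy : R v v v y = 0 := by linarith [hskew v v v y]
    have hsplit : g y x = g y (x - ⟪x, v⟫ • v) + ⟪x, v⟫ * g y v := by
      rw [map_sub, map_smul, smul_eq_mul]
      ring
    rw [hsplit, hg, hg, heigen _ h₁ h₂ y, h₁, hvvvy, hvv, real_inner_comm v y]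
    ring
  have hg_swap : ∀ y, g y (A v) = g (A v) y := by
    intro y
    rw [hg, hg, jacobi_symm hskew hpair, hAv, real_inner_comm y (A v)]
    ring
  refine ⟨g (A v) (A v) / ⟪A v, A v⟫ ^ 2, fun x y => ?_⟩
  have hx := (g y).apply_eq_inner_mul_of_forall_inner_eq_zero (hg_eq_zero y) x
  have hy := (g (A v)).apply_eq_inner_mul_of_forall_inner_eq_zero (hg_eq_zero (A v)) y
  rw [hg, hg_swap, hy] at hx
  rw [hvv]
  linear_combination hx

theorem IsModelJacobi.const_ne_zero (hAskew : ∀ x y : V, ⟪A x, y⟫ = -⟪x, A y⟫) {v : V}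
    (h : IsModelJacobi R A c v) (hv : ‖v‖ = 1) (hAv : A v ≠ 0)
    (hE : ∀ w, ⟪w, v⟫ = 0 → (∀ u, R w v v u = ⟪w, u⟫) → w ∈ (Submodule.span ℝ {v, A v})ᗮ) :
    c ≠ 0 := by
  rintro rfl
  have hvv : ⟪v, v⟫ = 1 := by rw [real_inner_self_eq_norm_sq, hv, one_pow]
  have hAvv : ⟪A v, v⟫ = 0 := inner_apply_self_eq_zero_of_skew hAskew v
  have hmem := hE (A v) hAvv fun u => by rw [h, hvv, hAvv]; ring
  exact hAv (inner_self_eq_zero.mp ((Submodule.mem_orthogonal' _ _).mp hmem (A v)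
    (Submodule.subset_span (by simp))))

theorem exists_isModelJacobi_of_ne_zero (hskew : ∀ X Y Z W : V, R X Y Z W = - R Y X Z W)
    (hpair : ∀ X Y Z W : V, R X Y Z W = R Z W X Y) (hA : Function.Injective A)
    (hAskew : ∀ x y : V, ⟪A x, y⟫ = -⟪x, A y⟫)
    (hE : ∀ v : V, ‖v‖ = 1 → ∀ w : V,
      (⟪w, v⟫ = 0 ∧ ∀ u : V, R w v v u = ⟪w, u⟫) ↔ w ∈ (Submodule.span ℝ {v, A v})ᗮ)
    {v : V} (hv : v ≠ 0) : ∃ c ≠ 0, IsModelJacobi R A c v := by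
  set v₁ := ‖v‖⁻¹ • v
  have hv₁ : ‖v₁‖ = 1 := norm_smul_inv_norm hv
  have heigen : ∀ w, ⟪w, v₁⟫ = 0 → ⟪w, A v₁⟫ = 0 → ∀ u, R w v₁ v₁ u = ⟪w, u⟫ :=
    fun w h₁ h₂ => ((hE v₁ hv₁ w).mpr (mem_orthogonal_span_pair h₁ h₂)).2
  obtain ⟨c, hc⟩ := exists_isModelJacobi_of_norm_eq_one hskew hpair hAskew hv₁ heigen
  have hAv₁ : A v₁ ≠ 0 := (map_ne_zero_iff A hA).mpr (norm_ne_zero_iff.mp (by simp [hv₁]))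
  refine ⟨c, hc.const_ne_zero hAskew hv₁ hAv₁ fun w h₁ h₂ => (hE v₁ hv₁ w).mp ⟨h₁, h₂⟩, ?_⟩
  simpa [v₁, smul_smul, mul_inv_cancel₀ (norm_ne_zero_iff.mpr hv)] using hc.smul ‖v‖

theorem IsModelJacobi.const_eq_of_inner_eq_zero (hA : Function.Surjective A)
    (hAskew : ∀ x y : V, ⟪A x, y⟫ = -⟪x, A y⟫) {u v : V} {cu cv cp cm : ℝ}
    (hu : u ≠ 0) (hv : v ≠ 0) (huv : ⟪u, v⟫ = 0)
    (hcu : IsModelJacobi R A cu u) (hcv : IsModelJacobi R A cv v)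
    (hcp : IsModelJacobi R A cp (u + v)) (hcm : IsModelJacobi R A cm (u - v)) : cu = cv := by
  have hpar : ∀ x, cp * (⟪x, A u⟫ + ⟪x, A v⟫) ^ 2 + cm * (⟪x, A u⟫ - ⟪x, A v⟫) ^ 2
      = 2 * cu * ⟪x, A u⟫ ^ 2 + 2 * cv * ⟪x, A v⟫ ^ 2 := by
    intro x
    have hR : R x (u + v) (u + v) x + R x (u - v) (u - v) x
        = 2 * R x u u x + 2 * R x v v x := by
      rw [map_add (R x), map_sub (R x)]
      simp only [LinearMap.add_apply, LinearMap.sub_apply, map_add, map_sub]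
      ring
    rw [hcp, hcm, hcu, hcv] at hR
    simp only [map_add, map_sub, inner_add_left, inner_add_right, inner_sub_left,
      inner_sub_right] at hR
    linear_combination hR
  -- `A` is onto, so `x ↦ (⟪x, A u⟫, ⟪x, A v⟫)` hits `(‖u‖², 0)` and `(0, ‖v‖²)`
  have hdual : ∀ z, ∃ x, ∀ y, ⟪x, A y⟫ = ⟪z, y⟫ := fun z => by
    obtain ⟨x, hx⟩ := hA (-z)
    exact ⟨x, fun y => by rw [← neg_neg ⟪x, A y⟫, ← hAskew, hx, inner_neg_left, neg_neg]⟩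
  obtain ⟨xu, hxu⟩ := hdual u
  obtain ⟨xv, hxv⟩ := hdual v
  have hu' := hpar xu
  have hv' := hpar xv
  rw [hxu, hxu, huv] at hu'
  rw [hxv, hxv, real_inner_comm, huv] at hv'
  have hu₀ : ⟪u, u⟫ ^ 2 ≠ 0 := pow_ne_zero 2 (inner_self_ne_zero.mpr hu)
  have hv₀ : ⟪v, v⟫ ^ 2 ≠ 0 := pow_ne_zero 2 (inner_self_ne_zero.mpr hv)
  have hu'' : cp + cm = 2 * cu := mul_right_cancel₀ hu₀ (by linear_combination hu')
  have hv'' : cp + cm = 2 * cv := mul_right_cancel₀ hv₀ (by linear_combination hv')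
  linarith

theorem exists_forall_isModelJacobi [FiniteDimensional ℝ V] (hdim : 3 ≤ Module.finrank ℝ V)
    (hA : Function.Surjective A) (hAskew : ∀ x y : V, ⟪A x, y⟫ = -⟪x, A y⟫)
    (hex : ∀ v, v ≠ 0 → ∃ c ≠ 0, IsModelJacobi R A c v) :
    ∃ c ≠ 0, ∀ v, IsModelJacobi R A c v := by
  classical
  have horth : ∀ {u p cu cp}, u ≠ 0 → p ≠ 0 → ⟪u, p⟫ = 0 →
      IsModelJacobi R A cu u → IsModelJacobi R A cp p → cu = cp := by
    intro u p cu cp hu hp hup hcu hcp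
    have hu₀ : 0 < ‖u‖ ^ 2 := by positivity
    have hadd : u + p ≠ 0 := fun h => by
      have := norm_add_sq_eq_norm_sq_add_norm_sq_real hup
      rw [h, norm_zero] at this
      nlinarith [sq_nonneg ‖p‖]
    have hsub : u - p ≠ 0 := fun h => by
      have := norm_sub_sq_eq_norm_sq_add_norm_sq_real hup
      rw [h, norm_zero] at this
      nlinarith [sq_nonneg ‖p‖]
    obtain ⟨cadd, -, hcadd⟩ := hex _ hadd
    obtain ⟨csub, -, hcsub⟩ := hex _ hsub
    exact hcu.const_eq_of_inner_eq_zero hA hAskew hu hp hup hcp hcadd hcsub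
  obtain ⟨v₀, hv₀⟩ := Module.finrank_pos_iff_exists_ne_zero.mp (by omega : 0 < Module.finrank ℝ V)
  obtain ⟨c₀, hc₀, h₀⟩ := hex v₀ hv₀
  refine ⟨c₀, hc₀, fun v => ?_⟩
  rcases eq_or_ne v 0 with rfl | hv
  · intro x y
    simp
  obtain ⟨c, -, hc⟩ := hex v hv
  obtain ⟨p, hp, hperp⟩ := exists_ne_zero_forall_inner_eq_zero {v, v₀}
    (Finset.card_le_two.trans_lt (by omega))
  obtain ⟨cp, -, hcp⟩ := hex p hp
  rwa [horth hv₀ hp (hperp v₀ (by simp)) h₀ hcp,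
    ← horth hv hp (hperp v (by simp)) hc hcp]

theorem apply_add_apply_swap_of_forall_isModelJacobi (h : ∀ v, IsModelJacobi R A c v)
    (x u v y : V) :
    R x u v y + R x v u y = 2 * ⟪u, v⟫ * ⟪x, y⟫ - ⟪x, u⟫ * ⟪y, v⟫ - ⟪x, v⟫ * ⟪y, u⟫
      + c * (⟪x, A u⟫ * ⟪y, A v⟫ + ⟪x, A v⟫ * ⟪y, A u⟫) := by
  have huv := h (u + v) x y
  rw [map_add (R x)] at huv
  simp only [LinearMap.add_apply, map_add, inner_add_left, inner_add_right] at huv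
  linear_combination huv - h u x y - h v x y + ⟪x, y⟫ * real_inner_comm u v

theorem apply_apply_eq_or_eq_neg_swap (hpair : ∀ X Y Z W : V, R X Y Z W = R Z W X Y)
    (hkahler : ∀ X Y Z W : V, R (J X) (J Y) Z W = R X Y Z W)
    (hJiso : ∀ x y : V, ⟪J x, J y⟫ = ⟪x, y⟫) (hJ2 : ∀ x : V, J (J x) = -x) (hc : c ≠ 0)
    (h : ∀ v, IsModelJacobi R A c v) (u : V) : A (J u) = J (A u) ∨ A (J u) = -J (A u) := by
  refine eq_or_eq_neg_of_forall_inner_sq_eq fun x => ?_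
  obtain ⟨z, rfl⟩ : ∃ z, J z = x := ⟨-J x, by rw [map_neg, hJ2, neg_neg]⟩
  have hR : R (J z) (J u) (J u) (J z) = R z u u z := by
    rw [hkahler, hpair, hkahler, ← hpair]
  rw [h, h, hJiso, hJiso, hJiso] at hR
  rw [hJiso]
  exact mul_left_cancel₀ hc (by linear_combination hR)

theorem smul_apply_apply_eq_of_inner_eq_zero (hskew : ∀ X Y Z W : V, R X Y Z W = - R Y X Z W)
    (hbianchi : ∀ X Y Z W : V, R X Y Z W + R Y Z X W + R Z X Y W = 0)
    (hkahler : ∀ X Y Z W : V, R (J X) (J Y) Z W = R X Y Z W)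
    (hJiso : ∀ x y : V, ⟪J x, J y⟫ = ⟪x, y⟫) (hJskew : ∀ x y : V, ⟪J x, y⟫ = -⟪x, J y⟫)
    (hAskew : ∀ x y : V, ⟪A x, y⟫ = -⟪x, A y⟫) (h : ∀ v, IsModelJacobi R A c v) {u v : V}
    (hcomm : A (J u) = J (A u) ∨ A (J u) = -J (A u))
    (h₁ : ⟪u, v⟫ = 0) (h₂ : ⟪J u, v⟫ = 0) (h₃ : ⟪A u, v⟫ = 0) (h₄ : ⟪A (J u), v⟫ = 0) :
    (c * ⟪J v, A v⟫) • A (J u) = (-3 * ⟪v, v⟫) • u := by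
  have hK := apply_add_apply_swap_of_forall_isModelJacobi h
  have hAJu : ∀ z, ⟪A u, z⟫ = 0 → ⟪A (J u), J z⟫ = 0 := by
    intro z hz
    rcases hcomm with hc | hc <;> simp [hc, hJiso, hz]
  have e₁ : ⟪J v, v⟫ = 0 := inner_apply_self_eq_zero_of_skew hJskew v
  have e₂ : ⟪J u, J v⟫ = 0 := by rw [hJiso, h₁]
  have e₃ : ⟪J v, J u⟫ = 0 := by rw [real_inner_comm, e₂]
  have e₄ : ⟪J u, A v⟫ = 0 := by rw [← neg_eq_zero, ← hAskew, h₄]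
  have e₅ : ⟪J u, A (J v)⟫ = 0 := by
    rw [← neg_eq_zero, ← hAskew, hAJu v h₃]
  have e₆ : ⟪J v, A (J u)⟫ = 0 := by rw [real_inner_comm, hAJu v h₃]
  have e₇ : ⟪v, A u⟫ = 0 := by rw [real_inner_comm, h₃]
  have e₈ : ⟪u, A v⟫ = 0 := by rw [← neg_eq_zero, ← hAskew, h₃]
  have e₉ : ⟪v, A v⟫ = 0 := by rw [real_inner_comm, inner_apply_self_eq_zero_of_skew hAskew]
  have e₁₀ : ⟪v, u⟫ = 0 := by rw [real_inner_comm, h₁]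
  -- the Kähler identity and Bianchi for `(J u, J v, v)` tie the polarized formulas together
  refine ext_inner_right ℝ fun y => ?_
  have k₁ := hK (J u) (J v) v y
  have k₂ := hK (J v) (J u) v y
  have k₃ := hK v u v y
  have m := h v u y
  simp only [e₁, e₂, e₃, e₄, e₅, e₆, e₇, e₈, e₉, e₁₀, h₁, h₂, mul_zero, zero_mul,
    sub_zero, add_zero, zero_add] at k₁ k₂ k₃ m
  rw [real_inner_smul_left, real_inner_smul_left, real_inner_comm y (A (J u)),
    real_inner_comm y u]
  linear_combination hbianchi (J u) (J v) v y - hskew v (J u) (J v) y - 2 * hkahler u v v y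
    + hkahler v u v y + k₁ - k₂ + k₃ - hskew v v u y / 2 - 2 * m
    + 2 * ⟪v, v⟫ * real_inner_comm u y

theorem span_singleton_apply_eq_span_singleton_apply [FiniteDimensional ℝ V]
    (hdim : 5 ≤ Module.finrank ℝ V)
    (hskew : ∀ X Y Z W : V, R X Y Z W = - R Y X Z W)
    (hbianchi : ∀ X Y Z W : V, R X Y Z W + R Y Z X W + R Z X Y W = 0)
    (hkahler : ∀ X Y Z W : V, R (J X) (J Y) Z W = R X Y Z W)
    (hJiso : ∀ x y : V, ⟪J x, J y⟫ = ⟪x, y⟫) (hJskew : ∀ x y : V, ⟪J x, y⟫ = -⟪x, J y⟫)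
    (hJ2 : ∀ x : V, J (J x) = -x) (hAskew : ∀ x y : V, ⟪A x, y⟫ = -⟪x, A y⟫)
    (h : ∀ v, IsModelJacobi R A c v) (hcomm : ∀ u, A (J u) = J (A u) ∨ A (J u) = -J (A u))
    (u : V) : ℝ ∙ A u = ℝ ∙ J u := by
  classical
  rcases eq_or_ne u 0 with rfl | hu
  · simp
  obtain ⟨v, hv, hperp⟩ := exists_ne_zero_forall_inner_eq_zero {u, J u, A u, A (J u)}
    (Finset.card_le_four.trans_lt (by omega))
  have key := smul_apply_apply_eq_of_inner_eq_zero hskew hbianchi hkahler hJiso hJskew hAskew h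
    (hcomm (J u)) (hperp (J u) (by simp))
    (by rw [hJ2, inner_neg_left, hperp u (by simp), neg_zero]) (hperp (A (J u)) (by simp))
    (by rw [hJ2, map_neg, inner_neg_left, hperp (A u) (by simp), neg_zero])
  rw [hJ2, map_neg, smul_neg, ← neg_smul] at key
  have hs : -3 * ⟪v, v⟫ ≠ 0 := mul_ne_zero (by norm_num) (inner_self_ne_zero.mpr hv)
  have hJu : J u ≠ 0 := fun h0 =>
    hu (inner_self_eq_zero.mp (by rw [← hJiso, h0, inner_zero_left]))
  have hκ : -(c * ⟪J v, A v⟫) ≠ 0 := by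
    intro h0
    rw [h0, zero_smul, eq_comm, smul_eq_zero] at key
    exact key.elim hs hJu
  rw [← Submodule.span_singleton_smul_eq (IsUnit.mk0 _ hκ), key,
    Submodule.span_singleton_smul_eq (IsUnit.mk0 _ hs)]

end Curvature

theorem Submodule.map_eq_self_of_span_singleton_eq {K W : Type*} [Field K] [AddCommGroup W]
    [Module K W] {f g : W →ₗ[K] W} (hf : Function.Injective f) (hfg : ∀ u, K ∙ f u = K ∙ g u)
    {σ : Submodule K W} [FiniteDimensional K σ] (hg : σ.map g = σ) : σ.map f = σ := by
  refine Submodule.eq_of_le_of_finrank_eq ?_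
    (Submodule.equivMapOfInjective f hf σ).finrank_eq.symm
  rintro _ ⟨u, hu, rfl⟩
  have hgu : K ∙ g u ≤ σ :=
    (Submodule.span_singleton_le_iff_mem _ _).mpr (hg ▸ mem_map_of_mem hu)
  exact hgu (hfg u ▸ Submodule.mem_span_singleton_self (f u))

theorem Submodule.map_eq_self_iff_of_span_singleton_eq {K W : Type*} [Field K] [AddCommGroup W]
    [Module K W] {f g : W →ₗ[K] W} (hf : Function.Injective f) (hg : Function.Injective g)
    (hfg : ∀ u, K ∙ f u = K ∙ g u) (σ : Submodule K W) [FiniteDimensional K σ] :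
    σ.map f = σ ↔ σ.map g = σ :=
  ⟨map_eq_self_of_span_singleton_eq hg fun u => (hfg u).symm,
    map_eq_self_of_span_singleton_eq hf hfg⟩

theorem stmt_19_general
    {V : Type*} [NormedAddCommGroup V] [InnerProductSpace ℝ V] [FiniteDimensional ℝ V]
    (hdim : 6 ≤ Module.finrank ℝ V)
    (J : V →ₗ[ℝ] V)
    (hJiso : ∀ x y : V, ⟪J x, J y⟫ = ⟪x, y⟫)
    (hJ2 : ∀ x : V, J (J x) = -x)
    (R : V →ₗ[ℝ] V →ₗ[ℝ] V →ₗ[ℝ] V →ₗ[ℝ] ℝ)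
    (hskew : ∀ X Y Z W : V, R X Y Z W = - R Y X Z W)
    (hpair : ∀ X Y Z W : V, R X Y Z W = R Z W X Y)
    (hbianchi : ∀ X Y Z W : V, R X Y Z W + R Y Z X W + R Z X Y W = 0)
    (hkahler : ∀ X Y Z W : V, R (J X) (J Y) Z W = R X Y Z W)
    (A : V →ₗ[ℝ] V) (hAinv : Function.Bijective A)
    (hAskew : ∀ x y : V, ⟪A x, y⟫ = -⟪x, A y⟫)
    (hE : ∀ v : V, ‖v‖ = 1 → ∀ w : V,
      (⟪w, v⟫ = 0 ∧ ∀ u : V, R w v v u = ⟪w, u⟫) ↔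
        w ∈ (Submodule.span ℝ {v, A v})ᗮ)
    (σ : Submodule ℝ V) :
    Submodule.map J σ = σ ↔ Submodule.map A σ = σ := by
  have hJskew : ∀ x y : V, ⟪J x, y⟫ = -⟪x, J y⟫ := fun x y => by
    rw [← hJiso, hJ2, inner_neg_left]
  have hJinj : Function.Injective J := fun x y hxy => by
    simpa [hJ2] using congrArg J hxy
  obtain ⟨c, hc, hmodel⟩ := exists_forall_isModelJacobi (by omega) hAinv.2 hAskew
    fun v hv => exists_isModelJacobi_of_ne_zero hskew hpair hAinv.1 hAskew hE hv
  have hcomm := apply_apply_eq_or_eq_neg_swap hpair hkahler hJiso hJ2 hc hmodel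
  have hline : ∀ u, ℝ ∙ J u = ℝ ∙ A u := fun u =>
    (span_singleton_apply_eq_span_singleton_apply (by omega) hskew hbianchi hkahler hJiso hJskew
      hJ2 hAskew hmodel hcomm u).symm
  exact Submodule.map_eq_self_iff_of_span_singleton_eq hJinj hAinv.1 hline σ

/-- In the Kähler cvc(1) package with `dim V ≥ 6`, a 2-dimensional
subspace `σ` is `J`-invariant iff it is `A`-invariant. -/
theorem stmt_19
    {V : Type*} [NormedAddCommGroup V] [InnerProductSpace ℝ V] [FiniteDimensional ℝ V]
    (hdim : 6 ≤ Module.finrank ℝ V)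
    (J : V →ₗ[ℝ] V)
    (hJiso : ∀ x y : V, ⟪J x, J y⟫ = ⟪x, y⟫)
    (hJ2 : ∀ x : V, J (J x) = -x)
    (R : V →ₗ[ℝ] V →ₗ[ℝ] V →ₗ[ℝ] V →ₗ[ℝ] ℝ)
    (hskew : ∀ X Y Z W : V, R X Y Z W = - R Y X Z W)
    (hpair : ∀ X Y Z W : V, R X Y Z W = R Z W X Y)
    (hbianchi : ∀ X Y Z W : V, R X Y Z W + R Y Z X W + R Z X Y W = 0)
    (hkahler : ∀ X Y Z W : V, R (J X) (J Y) Z W = R X Y Z W)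
    (hsec : ∀ x y : V, ‖x‖ = 1 → ‖y‖ = 1 → ⟪x, y⟫ = 0 → 1 ≤ R y x x y)
    (A : V →ₗ[ℝ] V) (hAinv : Function.Bijective A)
    (hAskew : ∀ x y : V, ⟪A x, y⟫ = -⟪x, A y⟫)
    (hE : ∀ v : V, ‖v‖ = 1 → ∀ w : V,
      (⟪w, v⟫ = 0 ∧ ∀ u : V, R w v v u = ⟪w, u⟫) ↔
        w ∈ (Submodule.span ℝ {v, A v})ᗮ)
    (σ : Submodule ℝ V) (hσ : Module.finrank ℝ σ = 2) :
    Submodule.map J σ = σ ↔ Submodule.map A σ = σ :=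
  stmt_19_general hdim J hJiso hJ2 R hskew hpair hbianchi hkahler A hAinv hAskew hE σ
end
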